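/- Let N be a left cancellative monoid of finite right geometric type, finitely generated, M ⊆ N a left unitary submonoid, and P ⊆ N a finite set of right units with MP = N. Then M is finitely generated and M is quasi-isometric to N. -/

import Mathlib

open scoped ENNReal NNReal

def IsSemimetric {X : Type*} (d : X → X → ℝ≥0∞) : Prop :=
  (∀ x y, d x y = 0 ↔ x = y) ∧ ∀ x y z, d x z ≤ d x y + d y z

noncomputable def wordDist {M : Type*} [Monoid M] (S : Set M) (x y : M) : ℝ≥0∞ :=
  sInf {n : ℝ≥0∞ | ∃ w : List M, (∀ s ∈ w, s ∈ S) ∧ x * w.prod = y ∧ n = w.length}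

noncomputable def setDist {X : Type*} (d : X → X → ℝ≥0∞) (A B : Set X) : ℝ≥0∞ :=
  ⨅ a ∈ A, ⨅ b ∈ B, d a b

/-!
Let `K` bound the `T`-lengths of the elements of `P` and of chosen right inverses, and let `S`
be the set of elements of `M` of `T`-length at most `2K + 1`. Follow a `T`-word `t₁ ⋯ t_k`
from `x ∈ M` to `y ∈ M`, writing each prefix as `x t₁ ⋯ t_i = m_i p_i` with `m_i ∈ M`,
`p_i ∈ P`. Then `m_{i+1} = m_i (p_i t_{i+1} q_{i+1})` with `p_{i+1} q_{i+1} = 1`, and left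
unitarity puts the connecting element into `S`; so `d_S ≤ d_T + 1` on `M`. Conversely every
letter of `S` costs at most `2K + 1` letters of `T`, and every `n = m p` lies within `K` of `M`
in both directions.
-/

section WordMetric

variable {N : Type*} [Monoid N] {S : Set N}

lemma wordDist_le_length {x y : N} (w : List N) (hw : ∀ s ∈ w, s ∈ S) (hxy : x * w.prod = y) :
    wordDist S x y ≤ w.length :=
  sInf_le ⟨w, hw, hxy, rfl⟩

lemma exists_list_of_wordDist_ne_top {x y : N} (h : wordDist S x y ≠ ⊤) :
    ∃ w : List N, (∀ s ∈ w, s ∈ S) ∧ x * w.prod = y ∧ wordDist S x y = w.length := by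
  set A : Set ℕ := {k | ∃ w : List N, (∀ s ∈ w, s ∈ S) ∧ x * w.prod = y ∧ k = w.length}
  have hA : A.Nonempty := by
    by_contra hA
    refine h (sInf_eq_top.mpr ?_)
    rintro _ ⟨w, hw, hxy, -⟩
    exact (hA ⟨w.length, w, hw, hxy, rfl⟩).elim
  obtain ⟨w, hw, hxy, hmin⟩ := Nat.sInf_mem hA
  refine ⟨w, hw, hxy, le_antisymm (wordDist_le_length w hw hxy) (le_sInf ?_)⟩
  rintro _ ⟨w', hw', hxy', rfl⟩
  have hle : sInf A ≤ w'.length := Nat.sInf_le ⟨w', hw', hxy', rfl⟩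
  exact_mod_cast hmin ▸ hle

lemma wordDist_self (x : N) : wordDist S x x = 0 :=
  nonpos_iff_eq_zero.mp (by simpa using wordDist_le_length (S := S) [] (by simp) (mul_one x))

lemma wordDist_mul_right_le_one {s : N} (hs : s ∈ S) (x : N) : wordDist S x (x * s) ≤ 1 := by
  simpa using wordDist_le_length [s] (by simpa using hs) (by simp)

lemma wordDist_triangle (x y z : N) : wordDist S x z ≤ wordDist S x y + wordDist S y z := by
  by_cases hxy : wordDist S x y = ⊤
  · simp [hxy]
  by_cases hyz : wordDist S y z = ⊤
  · simp [hyz]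
  obtain ⟨u, hu, rfl, hu'⟩ := exists_list_of_wordDist_ne_top hxy
  obtain ⟨v, hv, rfl, hv'⟩ := exists_list_of_wordDist_ne_top hyz
  calc wordDist S x (x * u.prod * v.prod) ≤ (u ++ v).length :=
        wordDist_le_length _ (by simpa [or_imp, forall_and] using ⟨hu, hv⟩)
          (by rw [List.prod_append, mul_assoc])
    _ = _ := by simp [hu', hv']

lemma wordDist_mul_left_le (g x y : N) : wordDist S (g * x) (g * y) ≤ wordDist S x y := by
  by_cases hxy : wordDist S x y = ⊤
  · simp [hxy]
  obtain ⟨w, hw, rfl, hw'⟩ := exists_list_of_wordDist_ne_top hxy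
  exact hw' ▸ wordDist_le_length w hw (mul_assoc _ _ _)

lemma wordDist_one_mul_le (a b : N) : wordDist S 1 (a * b) ≤ wordDist S 1 a + wordDist S 1 b :=
  (wordDist_triangle 1 a (a * b)).trans
    (add_le_add le_rfl (by simpa using wordDist_mul_left_le (S := S) a 1 b))

lemma exists_wordDist_one_le_natCast (hS : Submonoid.closure S = ⊤) (x : N) :
    ∃ n : ℕ, wordDist S 1 x ≤ n := by
  obtain ⟨w, hw, rfl⟩ := Submonoid.exists_list_of_mem_closure (hS ▸ Submonoid.mem_top x)
  exact ⟨w.length, wordDist_le_length w hw (one_mul _)⟩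

lemma closure_eq_top_of_wordDist_one_ne_top (h : ∀ x : N, wordDist S 1 x ≠ ⊤) :
    Submonoid.closure S = ⊤ := by
  refine eq_top_iff.mpr fun x _ => ?_
  obtain ⟨w, hw, rfl, -⟩ := exists_list_of_wordDist_ne_top (h x)
  rw [one_mul]
  exact Submonoid.list_prod_mem _ fun s hs => Submonoid.subset_closure (hw s hs)

lemma finite_setOf_wordDist_le (hS : S.Finite) (x : N) (r : ℕ) :
    {y | wordDist S x y ≤ r}.Finite := by
  have := hS.to_subtype
  refine ((List.finite_length_le S r).image fun l => x * (l.map (↑)).prod).subset ?_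
  intro y hy
  obtain ⟨w, hw, rfl, hlen⟩ := exists_list_of_wordDist_ne_top (ne_top_of_le_ne_top (by simp) hy)
  have hwr : w.length ≤ r := by rw [Set.mem_ofPred_eq, hlen] at hy; exact_mod_cast hy
  lift w to List S using hw
  exact ⟨w, by simpa using hwr, by simp⟩

lemma wordDist_map_le {M : Type*} [Monoid M] {R : Set M} (f : M →* N) {C : ℕ} (hC : C ≠ 0)
    (hR : ∀ r ∈ R, wordDist S 1 (f r) ≤ C) (x y : M) :
    wordDist S (f x) (f y) ≤ C * wordDist R x y := by
  by_cases hxy : wordDist R x y = ⊤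
  · simp [hxy, hC]
  obtain ⟨w, hw, rfl, hw'⟩ := exists_list_of_wordDist_ne_top hxy
  rw [hw']
  clear hw' hxy
  induction w generalizing x with
  | nil => simp [wordDist_self]
  | cons r w ih =>
    simp only [List.forall_mem_cons] at hw
    calc wordDist S (f x) (f (x * (r :: w).prod))
        ≤ wordDist S (f x) (f (x * r)) + wordDist S (f (x * r)) (f (x * r * w.prod)) := by
          rw [List.prod_cons, ← mul_assoc]; exact wordDist_triangle _ _ _
      _ ≤ C + C * w.length := by
          gcongr
          · simpa using (wordDist_mul_left_le (f x) 1 (f r)).trans (hR r hw.1)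
          · exact ih (x * r) hw.2
      _ = C * (r :: w).length := by simp only [List.length_cons, Nat.cast_succ]; ring

end WordMetric

def Submonoid.wordBall {N : Type*} [Monoid N] (M : Submonoid N) (T : Set N) (r : ℕ) : Set M :=
  {s | wordDist T 1 (s : N) ≤ r}

section LeftUnitary

variable {N : Type*} [Monoid N] {T : Set N} {M : Submonoid N} {P : Set N} {K : ℕ}

lemma Submonoid.finite_wordBall (hT : T.Finite) (r : ℕ) : (M.wordBall T r).Finite :=
  (finite_setOf_wordDist_le hT 1 r).preimage (f := ((↑) : M → N)) Subtype.val_injective.injOn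

lemma exists_uniform_wordDist_bound (hT : Submonoid.closure T = ⊤) (hP : P.Finite)
    (hPu : ∀ p ∈ P, ∃ q : N, p * q = 1) :
    ∃ K : ℕ, ∀ p ∈ P, wordDist T 1 p ≤ K ∧ ∃ q : N, p * q = 1 ∧ wordDist T 1 q ≤ K := by
  have hbound (p : P) :
      ∃ K : ℕ, wordDist T 1 p ≤ K ∧ ∃ q : N, p * q = 1 ∧ wordDist T 1 q ≤ K := by
    obtain ⟨q, hq⟩ := hPu p p.2
    obtain ⟨a, ha⟩ := exists_wordDist_one_le_natCast hT (p : N)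
    obtain ⟨b, hb⟩ := exists_wordDist_one_le_natCast hT q
    exact ⟨a + b, ha.trans (by gcongr; omega), q, hq, hb.trans (by gcongr; omega)⟩
  choose K hK using hbound
  have := hP.to_subtype
  obtain ⟨B, hB⟩ := Finite.bddAbove_range K
  have hKB (p : P) : (K p : ℝ≥0∞) ≤ B := by exact_mod_cast hB ⟨p, rfl⟩
  refine ⟨B, fun p hp => ?_⟩
  obtain ⟨hp₁, q, hq, hq₁⟩ := hK ⟨p, hp⟩
  exact ⟨hp₁.trans (hKB _), q, hq, hq₁.trans (hKB _)⟩

variable (hunit : ∀ s t : N, s ∈ M → s * t ∈ M → t ∈ M)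
  (hMP : ∀ n : N, ∃ m ∈ M, ∃ p ∈ P, m * p = n)
  (hK : ∀ p ∈ P, wordDist T 1 p ≤ K ∧ ∃ q : N, p * q = 1 ∧ wordDist T 1 q ≤ K)
include hunit hMP hK

lemma wordDist_wordBall_le_length_add_one (l : List N) (hl : ∀ t ∈ l, t ∈ T) (m y : M)
    (p : N) (hp : wordDist T 1 p ≤ K) (hy : (m : N) * p * l.prod = y) :
    wordDist (M.wordBall T (2 * K + 1)) m y ≤ l.length + 1 := by
  induction l generalizing m p with
  | nil =>
    rw [List.prod_nil, mul_one] at hy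
    have hpM : p ∈ M := hunit m p m.2 (hy ▸ y.2)
    have hp_mem : (⟨p, hpM⟩ : M) ∈ M.wordBall T (2 * K + 1) :=
      hp.trans (by exact_mod_cast (by omega : K ≤ 2 * K + 1))
    have hmy : y = m * ⟨p, hpM⟩ := Subtype.ext hy.symm
    simpa [hmy] using wordDist_mul_right_le_one hp_mem m
  | cons t l ih =>
    simp only [List.forall_mem_cons] at hl
    obtain ⟨m₁, hm₁, p₁, hp₁, hmp₁⟩ := hMP (m * p * t)
    obtain ⟨hp₁K, q₁, hq₁, hq₁K⟩ := hK p₁ hp₁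
    have hm₁_eq : (m : N) * (p * t * q₁) = m₁ := by
      rw [← mul_assoc, ← mul_assoc, ← hmp₁, mul_assoc m₁, hq₁, mul_one]
    have hsM : p * t * q₁ ∈ M := hunit m _ m.2 (hm₁_eq ▸ hm₁)
    have hs_mem : (⟨_, hsM⟩ : M) ∈ M.wordBall T (2 * K + 1) := by
      calc wordDist T 1 (p * t * q₁) ≤ K + 1 + K :=
            (wordDist_one_mul_le _ _).trans <| add_le_add ((wordDist_one_mul_le _ _).trans <|
              add_le_add hp (by simpa using wordDist_mul_right_le_one hl.1 1)) hq₁K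
        _ = (2 * K + 1 : ℕ) := by push_cast; ring
    have hstep : wordDist (M.wordBall T (2 * K + 1)) m ⟨m₁, hm₁⟩ ≤ 1 := by
      have hmm₁ : m * ⟨_, hsM⟩ = ⟨m₁, hm₁⟩ := Subtype.ext hm₁_eq
      exact hmm₁ ▸ wordDist_mul_right_le_one hs_mem m
    calc _ ≤ _ := wordDist_triangle _ ⟨m₁, hm₁⟩ _
      _ ≤ 1 + (l.length + 1) := add_le_add hstep
          (ih hl.2 ⟨m₁, hm₁⟩ p₁ hp₁K (by rw [← hy, List.prod_cons, ← mul_assoc, ← hmp₁]))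
      _ = (t :: l).length + 1 := by simp only [List.length_cons, Nat.cast_succ]; ring

lemma wordDist_wordBall_le_add_one (x y : M) :
    wordDist (M.wordBall T (2 * K + 1)) x y ≤ wordDist T x y + 1 := by
  by_cases hxy : wordDist T (x : N) y = ⊤
  · simp [hxy]
  obtain ⟨l, hl, hxl, hlen⟩ := exists_list_of_wordDist_ne_top hxy
  rw [hlen]
  exact wordDist_wordBall_le_length_add_one hunit hMP hK l hl x y 1 (by simp [wordDist_self])
    (by rw [mul_one, hxl])

omit hunit in
lemma exists_wordDist_le_and_le (n : N) :
    ∃ x : M, wordDist T x n ≤ K ∧ wordDist T n x ≤ K := by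
  obtain ⟨m, hm, p, hp, rfl⟩ := hMP n
  obtain ⟨hpK, q, hq, hqK⟩ := hK p hp
  refine ⟨⟨m, hm⟩, ?_, ?_⟩
  · simpa using (wordDist_mul_left_le m 1 p).trans hpK
  · have := (wordDist_mul_left_le (m * p) 1 q).trans hqK
    rwa [mul_one, mul_assoc, hq, mul_one] at this

end LeftUnitary

lemma ENNReal.div_sub_le_of_le_add_one {a b C : ℝ≥0∞} (h : a ≤ b + 1) (hC : 1 ≤ C) :
    a / C - C ≤ b := by
  rw [tsub_le_iff_right]
  calc a / C ≤ a := ENNReal.div_le_of_le_mul (le_mul_of_one_le_right' hC)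
    _ ≤ b + C := h.trans (add_le_add le_rfl hC)

theorem stmt_15_general {N : Type*} [Monoid N]
    (T : Set N) (hT : T.Finite) (hTgen : Submonoid.closure T = ⊤)
    (M : Submonoid N)
    (hunit : ∀ s t : N, s ∈ M → s * t ∈ M → t ∈ M)
    (P : Set N) (hP : P.Finite) (hPu : ∀ p ∈ P, ∃ q : N, p * q = 1)
    (hMP : ∀ n : N, ∃ m ∈ M, ∃ p ∈ P, m * p = n) :
    ∃ S : Set M, S.Finite ∧ Submonoid.closure S = ⊤ ∧
      ∃ (f : M → N) (lam eps mu : ℝ≥0), 1 ≤ lam ∧ 0 < eps ∧ 1 ≤ mu ∧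
        (∀ x y : M, wordDist S x y / (lam : ℝ≥0∞) - (eps : ℝ≥0∞) ≤ wordDist T (f x) (f y) ∧
          wordDist T (f x) (f y) ≤ (lam : ℝ≥0∞) * wordDist S x y + (eps : ℝ≥0∞)) ∧
        ∀ n : N, ∃ x : M, wordDist T (f x) n ≤ (mu : ℝ≥0∞) ∧ wordDist T n (f x) ≤ (mu : ℝ≥0∞) := by
  obtain ⟨K, hK⟩ := exists_uniform_wordDist_bound hTgen hP hPu
  set C : ℕ := 2 * K + 1
  have hC : (1 : ℝ≥0∞) ≤ C := by exact_mod_cast Nat.le_add_left 1 (2 * K)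
  have hKC : (K : ℝ≥0∞) ≤ C := by exact_mod_cast (by omega : K ≤ C)
  have hdist := wordDist_wordBall_le_add_one hunit hMP hK
  refine ⟨M.wordBall T C, Submonoid.finite_wordBall hT C,
    closure_eq_top_of_wordDist_one_ne_top fun x => ?_, Subtype.val, C, C, C,
    by exact_mod_cast hC, by positivity, by exact_mod_cast hC, fun x y => ⟨?_, ?_⟩, fun n => ?_⟩
  · obtain ⟨n, hn⟩ := exists_wordDist_one_le_natCast hTgen (x : N)
    exact ne_top_of_le_ne_top (b := n + 1) (by simp)
      ((hdist 1 x).trans (add_le_add (by simpa using hn) le_rfl))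
  · simpa using ENNReal.div_sub_le_of_le_add_one (hdist x y) hC
  · have hlip := wordDist_map_le (R := M.wordBall T C) M.subtype (by omega) (fun s hs => hs) x y
    simpa using hlip.trans le_self_add
  · obtain ⟨x, hx₁, hx₂⟩ := exists_wordDist_le_and_le hMP hK n
    exact ⟨x, by simpa using hx₁.trans hKC, by simpa using hx₂.trans hKC⟩

theorem stmt_15 {N : Type*} [Monoid N]
    (hlc : ∀ m x y : N, m * x = m * y → x = y)
    (hfgt : ∀ b c : N, {a : N | a * b = c}.Finite)
    (T : Set N) (hT : T.Finite) (hTgen : Submonoid.closure T = ⊤)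
    (M : Submonoid N)
    (hunit : ∀ s t : N, s ∈ M → s * t ∈ M → t ∈ M)
    (P : Set N) (hP : P.Finite) (hPu : ∀ p ∈ P, ∃ q : N, p * q = 1)
    (hMP : ∀ n : N, ∃ m ∈ M, ∃ p ∈ P, m * p = n) :
    ∃ S : Set M, S.Finite ∧ Submonoid.closure S = ⊤ ∧
      ∃ (f : M → N) (lam eps mu : ℝ≥0), 1 ≤ lam ∧ 0 < eps ∧ 1 ≤ mu ∧
        (∀ x y : M, wordDist S x y / (lam : ℝ≥0∞) - (eps : ℝ≥0∞) ≤ wordDist T (f x) (f y) ∧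
          wordDist T (f x) (f y) ≤ (lam : ℝ≥0∞) * wordDist S x y + (eps : ℝ≥0∞)) ∧
        ∀ n : N, ∃ x : M, wordDist T (f x) n ≤ (mu : ℝ≥0∞) ∧ wordDist T n (f x) ≤ (mu : ℝ≥0∞) :=
  stmt_15_general T hT hTgen M hunit P hP hPu hMP
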